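/- arXiv:2004.06661 — 4 statements merged into one kernel-verified Lean document; each statement's English description precedes it below -/
import Mathlib

section
/- Let M ∈ ℝ^{m×n} have unit-norm columns and satisfy the RIP of order 2k with constant δ ∈ (0,1). Let x ∈ ℝⁿ have support L with |L| = k, let y₀ = Mx ≠ 0, let w ∈ ℝᵐ, and let y = y₀ + w. Let T ⊆ {1,…,n} with |T| = k and T ∩ L = ∅. Then there exists an index i ∈ L such that |⟨R_T m_(i), y⟩| / ‖R_T m_(i)‖ ≥ √(c_δ(1−δ²)/k)·‖y₀‖ − |⟨R_T m_(i), w⟩| / ‖R_T m_(i)‖, where c_δ = (1−δ²)(1−δ). -/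
/-! Write `z = M x` and `P_T z = M u`, with `u` the least-squares coefficients extended by zero
off `T`. Then `R_T z = M (x - u)` with `x - u` supported on `L ∪ T`, so the lower RIP bound for
`x - u`, the upper one for `u` and `‖R_T z‖² + ‖P_T z‖² = ‖z‖²` give
`(1 - δ²)‖x‖² + (1 - δ)‖z‖² ≤ 2‖R_T z‖²`, and AM-GM turns this into
`(1 - δ²)√(1 - δ)‖x‖‖z‖ ≤ ‖R_T z‖²`. On the other hand
`‖R_T z‖² = ⟨z, R_T z⟩ = ∑_{i ∈ L} xᵢ⟨R_T mᵢ, z⟩ ≤ maxᵢ |⟨R_T mᵢ, z⟩| · √k ‖x‖`.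
Finally `‖R_T mᵢ‖ ≤ ‖mᵢ‖ = 1`, so normalising by `‖R_T mᵢ‖` only increases the correlation,
and the noise `w` enters through the triangle inequality. -/

open Matrix

noncomputable section

/-- `M` satisfies the RIP of order `s` with constant `δ` if
`(1−δ)‖v‖² ≤ ‖Mv‖² ≤ (1+δ)‖v‖²` for every `v` with at most `s` nonzero entries. -/
def RIP {m n : ℕ} (M : Matrix (Fin m) (Fin n) ℝ) (s : ℕ) (δ : ℝ) : Prop :=
  ∀ v : Fin n → ℝ, (∃ S : Finset (Fin n), S.card ≤ s ∧ ∀ i ∉ S, v i = 0) →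
    (1 - δ) * (v ⬝ᵥ v) ≤ (M *ᵥ v) ⬝ᵥ (M *ᵥ v) ∧
      (M *ᵥ v) ⬝ᵥ (M *ᵥ v) ≤ (1 + δ) * (v ⬝ᵥ v)

/-- `M_T`: the submatrix of `M` of the columns indexed by `T`. -/
def colsOf {m n : ℕ} (M : Matrix (Fin m) (Fin n) ℝ) (T : Finset (Fin n)) :
    Matrix (Fin m) {i // i ∈ T} ℝ :=
  M.submatrix id fun j => (j : Fin n)

/-- `P_T = M_T (M_TᵀM_T)⁻¹ M_Tᵀ`. -/
def projT {m n : ℕ} (M : Matrix (Fin m) (Fin n) ℝ) (T : Finset (Fin n)) :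
    Matrix (Fin m) (Fin m) ℝ :=
  colsOf M T * ((colsOf M T)ᵀ * colsOf M T)⁻¹ * (colsOf M T)ᵀ

/-- `R_T = I − P_T`. -/
def residT {m n : ℕ} (M : Matrix (Fin m) (Fin n) ℝ) (T : Finset (Fin n)) :
    Matrix (Fin m) (Fin m) ℝ :=
  1 - projT M T

/-- The Euclidean norm of a vector. -/
def nrm {ι : Type} [Fintype ι] (v : ι → ℝ) : ℝ := Real.sqrt (v ⬝ᵥ v)

open Finset

lemma dotProduct_self_nonneg {ι : Type*} [Fintype ι] (v : ι → ℝ) : 0 ≤ v ⬝ᵥ v :=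
  sum_nonneg fun i _ => mul_self_nonneg (v i)

lemma nrm_nonneg {ι : Type} [Fintype ι] (v : ι → ℝ) : 0 ≤ nrm v := Real.sqrt_nonneg _

lemma nrm_sq {ι : Type} [Fintype ι] (v : ι → ℝ) : nrm v ^ 2 = v ⬝ᵥ v :=
  Real.sq_sqrt (dotProduct_self_nonneg v)

lemma mulVec_dotProduct_eq_sum {m n : Type*} [Fintype m] [Fintype n] (M : Matrix m n ℝ)
    (x : n → ℝ) (q : m → ℝ) : (M *ᵥ x) ⬝ᵥ q = ∑ j, x j * ((fun r => M r j) ⬝ᵥ q) := by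
  rw [dotProduct_comm, dotProduct_mulVec, dotProduct]
  exact sum_congr rfl fun j _ => by rw [mul_comm, vecMul, dotProduct_comm]

namespace Matrix.IsSymm

variable {ι : Type*} [Fintype ι] {A : Matrix ι ι ℝ}

lemma mulVec_dotProduct_mulVec_self (hA : A.IsSymm) (hA' : IsIdempotentElem A) (z : ι → ℝ) :
    (A *ᵥ z) ⬝ᵥ (A *ᵥ z) = z ⬝ᵥ (A *ᵥ z) := by
  rw [dotProduct_mulVec, ← mulVec_transpose, hA.eq, mulVec_mulVec, hA'.eq, dotProduct_comm]

lemma one_sub_mulVec_sq_add_mulVec_sq [DecidableEq ι] (hA : A.IsSymm)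
    (hA' : IsIdempotentElem A) (z : ι → ℝ) :
    ((1 - A) *ᵥ z) ⬝ᵥ ((1 - A) *ᵥ z) + (A *ᵥ z) ⬝ᵥ (A *ᵥ z) = z ⬝ᵥ z := by
  rw [(isSymm_one.sub hA).mulVec_dotProduct_mulVec_self hA'.one_sub,
    hA.mulVec_dotProduct_mulVec_self hA', sub_mulVec, one_mulVec, dotProduct_sub]
  ring

end Matrix.IsSymm

section ZeroExtend

variable {ι : Type*} [DecidableEq ι] (T : Finset ι) (u : T → ℝ)

def zeroExtend : ι → ℝ := fun j => if h : j ∈ T then u ⟨j, h⟩ else 0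

lemma zeroExtend_of_notMem {j : ι} (hj : j ∉ T) : zeroExtend T u j = 0 := dif_neg hj

lemma sum_zeroExtend_mul [Fintype ι] (g : ι → ℝ) :
    ∑ j, zeroExtend T u j * g j = ∑ t : T, u t * g t := by
  rw [← sum_subset (subset_univ T) fun j _ hj => by rw [zeroExtend_of_notMem T u hj, zero_mul],
    ← sum_attach T]
  exact sum_congr rfl fun t _ => by rw [zeroExtend, dif_pos t.2]

lemma zeroExtend_dotProduct_self [Fintype ι] :
    zeroExtend T u ⬝ᵥ zeroExtend T u = u ⬝ᵥ u := by
  rw [dotProduct, sum_zeroExtend_mul]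
  exact sum_congr rfl fun t _ => by rw [zeroExtend, dif_pos t.2]

end ZeroExtend

section Projection

variable {m n : ℕ} {M : Matrix (Fin m) (Fin n) ℝ} {T : Finset (Fin n)}

variable (M T) in
lemma mulVec_zeroExtend (u : T → ℝ) : M *ᵥ zeroExtend T u = colsOf M T *ᵥ u := by
  funext r
  simp only [mulVec, dotProduct, colsOf, submatrix_apply, id, mul_comm (M r _)]
  exact sum_zeroExtend_mul T u (M r)

variable (M T) in
lemma projT_mulVec_eq_mulVec_zeroExtend (z : Fin m → ℝ) :
    projT M T *ᵥ z =
      M *ᵥ zeroExtend T (((colsOf M T)ᵀ * colsOf M T)⁻¹ *ᵥ ((colsOf M T)ᵀ *ᵥ z)) := by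
  rw [mulVec_zeroExtend, projT, mulVec_mulVec, mulVec_mulVec, Matrix.mul_assoc]

lemma RIP.injective_mulVec_colsOf {s : ℕ} {δ : ℝ} (hRIP : RIP M s δ) (hδ : δ < 1)
    (hT : T.card ≤ s) : Function.Injective (colsOf M T).mulVec := by
  rw [← coe_mulVecLin, injective_iff_map_eq_zero]
  intro u hu
  have h := (hRIP (zeroExtend T u) ⟨T, hT, fun j hj => zeroExtend_of_notMem T u hj⟩).1
  rw [mulVec_zeroExtend, ← coe_mulVecLin, hu, zero_dotProduct,
    zeroExtend_dotProduct_self] at h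
  exact dotProduct_self_eq_zero.mp <| le_antisymm
    (nonpos_of_mul_nonpos_right h (by linarith)) (dotProduct_self_nonneg u)

lemma RIP.isUnit_det_gram {s : ℕ} {δ : ℝ} (hRIP : RIP M s δ) (hδ : δ < 1) (hT : T.card ≤ s) :
    IsUnit ((colsOf M T)ᵀ * colsOf M T).det := by
  have h := PosDef.conjTranspose_mul_self _ (hRIP.injective_mulVec_colsOf hδ hT)
  rw [conjTranspose_eq_transpose_of_trivial] at h
  exact (isUnit_iff_isUnit_det _).mp h.isUnit

lemma projT_isSymm : (projT M T).IsSymm := by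
  have hG : ((colsOf M T)ᵀ * colsOf M T)ᵀ = (colsOf M T)ᵀ * colsOf M T := by
    rw [transpose_mul, transpose_transpose]
  rw [IsSymm, projT, transpose_mul, transpose_mul, transpose_transpose, transpose_nonsing_inv,
    hG, Matrix.mul_assoc]

lemma residT_isSymm : (residT M T).IsSymm := isSymm_one.sub projT_isSymm

lemma projT_isIdempotentElem (hdet : IsUnit ((colsOf M T)ᵀ * colsOf M T).det) :
    IsIdempotentElem (projT M T) := by
  have h := nonsing_inv_mul _ hdet
  simp only [IsIdempotentElem, projT, Matrix.mul_assoc]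
  rw [← Matrix.mul_assoc (colsOf M T)ᵀ, ← Matrix.mul_assoc _ ((colsOf M T)ᵀ * colsOf M T), h,
    Matrix.one_mul]

lemma residT_isIdempotentElem (hdet : IsUnit ((colsOf M T)ᵀ * colsOf M T).det) :
    IsIdempotentElem (residT M T) :=
  (projT_isIdempotentElem hdet).one_sub

lemma residT_mulVec_sq_add_projT_mulVec_sq (hdet : IsUnit ((colsOf M T)ᵀ * colsOf M T).det)
    (z : Fin m → ℝ) :
    (residT M T *ᵥ z) ⬝ᵥ (residT M T *ᵥ z) + (projT M T *ᵥ z) ⬝ᵥ (projT M T *ᵥ z) = z ⬝ᵥ z :=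
  projT_isSymm.one_sub_mulVec_sq_add_mulVec_sq (projT_isIdempotentElem hdet) z

lemma nrm_residT_mulVec_le (hdet : IsUnit ((colsOf M T)ᵀ * colsOf M T).det) (z : Fin m → ℝ) :
    nrm (residT M T *ᵥ z) ≤ nrm z :=
  Real.sqrt_le_sqrt <| by
    linarith [residT_mulVec_sq_add_projT_mulVec_sq hdet z, dotProduct_self_nonneg (projT M T *ᵥ z)]

lemma residT_mulVec_sq_eq_sum (hdet : IsUnit ((colsOf M T)ᵀ * colsOf M T).det)
    {x : Fin n → ℝ} {L : Finset (Fin n)} (hx : ∀ i ∉ L, x i = 0) :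
    (residT M T *ᵥ (M *ᵥ x)) ⬝ᵥ (residT M T *ᵥ (M *ᵥ x)) =
      ∑ i ∈ L, x i * ((residT M T *ᵥ fun r => M r i) ⬝ᵥ (M *ᵥ x)) := by
  rw [residT_isSymm.mulVec_dotProduct_mulVec_self (residT_isIdempotentElem hdet),
    mulVec_dotProduct_eq_sum, ← sum_subset (subset_univ L) fun i _ hi => by rw [hx i hi, zero_mul]]
  refine sum_congr rfl fun i _ => ?_
  rw [dotProduct_mulVec, ← mulVec_transpose, residT_isSymm.eq]

end Projection

lemma one_sub_sq_mul_sqrt_mul_mul_le {δ a A ρ : ℝ} (hδ0 : 0 ≤ δ) (hδ1 : δ < 1) (ha : 0 ≤ a)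
    (hA : 0 ≤ A) (h : (1 - δ ^ 2) * a ^ 2 + (1 - δ) * A ^ 2 ≤ 2 * ρ) :
    (1 - δ ^ 2) * √(1 - δ) * a * A ≤ ρ := by
  set s := √(1 - δ)
  set t := √(1 - δ ^ 2)
  have hs : s ^ 2 = 1 - δ := Real.sq_sqrt (by linarith)
  have ht : t ^ 2 = 1 - δ ^ 2 := Real.sq_sqrt (by nlinarith)
  have ht1 : t ≤ 1 := Real.sqrt_le_one.mpr (by nlinarith)
  have hts : 1 - δ ^ 2 ≤ t := by nlinarith [Real.sqrt_nonneg (1 - δ ^ 2)]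
  have amgm := two_mul_le_add_sq (t * a) (s * A)
  calc (1 - δ ^ 2) * s * a * A ≤ t * s * a * A := by gcongr
    _ ≤ ρ := by nlinarith

section Energy

variable {m n : ℕ} {M : Matrix (Fin m) (Fin n) ℝ} {T : Finset (Fin n)} {s : ℕ} {δ : ℝ}

lemma RIP.energy_le_two_mul_residT_sq (hRIP : RIP M s δ) (hδ0 : 0 ≤ δ) (hδ1 : δ < 1)
    {x : Fin n → ℝ} {L : Finset (Fin n)} (hx : ∀ i ∉ L, x i = 0) (hdisj : Disjoint T L)
    (hcard : L.card + T.card ≤ s) :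
    (1 - δ ^ 2) * (x ⬝ᵥ x) + (1 - δ) * ((M *ᵥ x) ⬝ᵥ (M *ᵥ x)) ≤
      2 * ((residT M T *ᵥ (M *ᵥ x)) ⬝ᵥ (residT M T *ᵥ (M *ᵥ x))) := by
  have hdet := hRIP.isUnit_det_gram (T := T) hδ1 (by omega)
  set u := ((colsOf M T)ᵀ * colsOf M T)⁻¹ *ᵥ ((colsOf M T)ᵀ *ᵥ (M *ᵥ x))
  have hPz := projT_mulVec_eq_mulVec_zeroExtend M T (M *ᵥ x)
  have hRz : residT M T *ᵥ (M *ᵥ x) = M *ᵥ (x - zeroExtend T u) := by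
    rw [residT, sub_mulVec, one_mulVec, hPz, mulVec_sub]
  have horth : zeroExtend T u ⬝ᵥ x = 0 := by
    rw [dotProduct, sum_zeroExtend_mul]
    exact sum_eq_zero fun t _ => by rw [hx t (disjoint_left.mp hdisj t.2), mul_zero]
  have hnorm : (x - zeroExtend T u) ⬝ᵥ (x - zeroExtend T u) = x ⬝ᵥ x + u ⬝ᵥ u := by
    rw [sub_dotProduct, dotProduct_sub, dotProduct_sub, dotProduct_comm x (zeroExtend T u), horth,
      zeroExtend_dotProduct_self]
    ring
  have hsupp : ∀ j ∉ L ∪ T, (x - zeroExtend T u) j = 0 := fun j hj => by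
    rw [mem_union, not_or] at hj
    rw [Pi.sub_apply, hx j hj.1, zeroExtend_of_notMem T u hj.2, sub_zero]
  have hlow := (hRIP _ ⟨L ∪ T, (card_union_le L T).trans hcard, hsupp⟩).1
  have hup := (hRIP (zeroExtend T u) ⟨T, by omega, fun j hj => zeroExtend_of_notMem T u hj⟩).2
  rw [← hRz, hnorm] at hlow
  rw [← hPz, zeroExtend_dotProduct_self] at hup
  have hpyth := residT_mulVec_sq_add_projT_mulVec_sq hdet (M *ᵥ x)
  nlinarith [mul_le_mul_of_nonneg_left hlow (by linarith : (0 : ℝ) ≤ 1 + δ),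
    mul_le_mul_of_nonneg_left hup (by linarith : (0 : ℝ) ≤ 1 - δ)]

lemma RIP.mul_nrm_mul_nrm_le_residT_sq (hRIP : RIP M s δ) (hδ0 : 0 ≤ δ) (hδ1 : δ < 1)
    {x : Fin n → ℝ} {L : Finset (Fin n)} (hx : ∀ i ∉ L, x i = 0) (hdisj : Disjoint T L)
    (hcard : L.card + T.card ≤ s) :
    (1 - δ ^ 2) * √(1 - δ) * nrm x * nrm (M *ᵥ x) ≤
      (residT M T *ᵥ (M *ᵥ x)) ⬝ᵥ (residT M T *ᵥ (M *ᵥ x)) :=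
  one_sub_sq_mul_sqrt_mul_mul_le hδ0 hδ1 (nrm_nonneg x) (nrm_nonneg _) <| by
    simpa only [nrm_sq] using hRIP.energy_le_two_mul_residT_sq hδ0 hδ1 hx hdisj hcard

end Energy

lemma exists_mem_sum_mul_le_abs_mul_sum_abs {ι : Type*} {L : Finset ι} (hL : L.Nonempty)
    (x c : ι → ℝ) : ∃ i ∈ L, ∑ j ∈ L, x j * c j ≤ |c i| * ∑ j ∈ L, |x j| := by
  obtain ⟨i, hi, hmax⟩ := exists_max_image L (fun j => |c j|) hL
  refine ⟨i, hi, ?_⟩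
  rw [mul_sum]
  refine sum_le_sum fun j hj => ?_
  calc x j * c j ≤ |x j| * |c j| := (le_abs_self _).trans (abs_mul _ _).le
    _ ≤ |c i| * |x j| := by
      rw [mul_comm]
      exact mul_le_mul_of_nonneg_right (hmax j hj) (abs_nonneg _)

lemma sum_abs_le_sqrt_card_mul_nrm {ι : Type} [Fintype ι] (L : Finset ι) (x : ι → ℝ) :
    ∑ j ∈ L, |x j| ≤ √(L.card) * nrm x := by
  rw [nrm, ← Real.sqrt_mul (Nat.cast_nonneg _)]
  refine Real.le_sqrt_of_sq_le ?_
  calc (∑ j ∈ L, |x j|) ^ 2 ≤ L.card * ∑ j ∈ L, |x j| ^ 2 := sq_sum_le_card_mul_sum_sq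
    _ ≤ L.card * (x ⬝ᵥ x) := by
      gcongr
      simp_rw [sq_abs, sq, dotProduct]
      exact sum_le_sum_of_subset_of_nonneg (subset_univ L) fun j _ _ => mul_self_nonneg (x j)

lemma sub_div_nrm_le_abs_dotProduct_add_div_nrm {ι : Type} [Fintype ι] {v y w : ι → ℝ} {β : ℝ}
    (hv : nrm v ≤ 1) (hβ : β ≤ |v ⬝ᵥ y|) :
    β - |v ⬝ᵥ w| / nrm v ≤ |v ⬝ᵥ (y + w)| / nrm v := by
  rcases (nrm_nonneg v).eq_or_lt with h0 | hpos
  · -- `v = 0`: both divisions are by zero and `β ≤ |0 ⬝ᵥ y| = 0`.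
    have hv0 : v = 0 := dotProduct_self_eq_zero.mp (by rw [← nrm_sq, ← h0]; ring)
    subst hv0
    simpa using hβ
  · have hyw : |v ⬝ᵥ y| - |v ⬝ᵥ w| ≤ |v ⬝ᵥ (y + w)| := by
      have := abs_sub (v ⬝ᵥ (y + w)) (v ⬝ᵥ w)
      rw [dotProduct_add, add_sub_cancel_right] at this
      rw [dotProduct_add]
      linarith
    calc β - |v ⬝ᵥ w| / nrm v ≤ (|v ⬝ᵥ y| - |v ⬝ᵥ w|) / nrm v := by
          rw [sub_div]; linarith [le_div_self (abs_nonneg (v ⬝ᵥ y)) hpos hv]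
      _ ≤ |v ⬝ᵥ (y + w)| / nrm v := by gcongr

lemma RIP.exists_mem_le_abs_residT_col_dotProduct {m n k : ℕ} {M : Matrix (Fin m) (Fin n) ℝ}
    {T : Finset (Fin n)} {δ : ℝ} (hRIP : RIP M (2 * k) δ) (hδ0 : 0 ≤ δ) (hδ1 : δ < 1)
    {x : Fin n → ℝ} {L : Finset (Fin n)} (hx : ∀ i ∉ L, x i = 0) (hx0 : x ≠ 0)
    (hL : L.card ≤ k) (hT : T.card ≤ k) (hdisj : Disjoint T L) :
    ∃ i ∈ L, √((1 - δ ^ 2) * (1 - δ) * (1 - δ ^ 2) / k) * nrm (M *ᵥ x) ≤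
      |(residT M T *ᵥ fun r => M r i) ⬝ᵥ (M *ᵥ x)| := by
  have hLne : L.Nonempty := by
    obtain ⟨i, hi⟩ := Function.ne_iff.mp hx0
    exact ⟨i, by_contra fun h => hi (hx i h)⟩
  have hdet := hRIP.isUnit_det_gram (T := T) hδ1 (by omega)
  obtain ⟨i, hiL, hi⟩ := exists_mem_sum_mul_le_abs_mul_sum_abs hLne x
    fun i => (residT M T *ᵥ fun r => M r i) ⬝ᵥ (M *ᵥ x)
  refine ⟨i, hiL, ?_⟩
  have hlow := hRIP.mul_nrm_mul_nrm_le_residT_sq hδ0 hδ1 hx hdisj (by omega)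
  rw [residT_mulVec_sq_eq_sum hdet hx] at hlow
  have hl1 : ∑ j ∈ L, |x j| ≤ √k * nrm x :=
    (sum_abs_le_sqrt_card_mul_nrm L x).trans <|
      mul_le_mul_of_nonneg_right (Real.sqrt_le_sqrt (by exact_mod_cast hL)) (nrm_nonneg x)
  have hkpos : 0 < √(k : ℝ) := Real.sqrt_pos.mpr (by exact_mod_cast hLne.card_pos.trans_le hL)
  have hxpos : 0 < nrm x := Real.sqrt_pos.mpr <|
    (dotProduct_self_nonneg x).lt_of_ne (Ne.symm (mt dotProduct_self_eq_zero.mp hx0))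
  have hsqrt : √((1 - δ ^ 2) * (1 - δ) * (1 - δ ^ 2) / k) = (1 - δ ^ 2) * √(1 - δ) / √k := by
    rw [show (1 - δ ^ 2) * (1 - δ) * (1 - δ ^ 2) / (k : ℝ) = (1 - δ ^ 2) ^ 2 * (1 - δ) / k by ring,
      Real.sqrt_div' _ (Nat.cast_nonneg k), Real.sqrt_mul' _ (by linarith),
      Real.sqrt_sq (by nlinarith)]
  rw [hsqrt, div_mul_eq_mul_div, div_le_iff₀ hkpos]
  refine le_of_mul_le_mul_right ?_ hxpos
  calc (1 - δ ^ 2) * √(1 - δ) * nrm (M *ᵥ x) * nrm x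
      = (1 - δ ^ 2) * √(1 - δ) * nrm x * nrm (M *ᵥ x) := by ring
    _ ≤ _ := hlow.trans hi
    _ ≤ |(residT M T *ᵥ fun r => M r i) ⬝ᵥ (M *ᵥ x)| * (√k * nrm x) := by gcongr
    _ = _ := by ring

theorem stmt12 {m n k : ℕ} (M : Matrix (Fin m) (Fin n) ℝ) (δ : ℝ)
    (hδ0 : 0 < δ) (hδ1 : δ < 1)
    (hunit : ∀ j : Fin n, (fun r => M r j) ⬝ᵥ (fun r => M r j) = 1)
    (hRIP : RIP M (2 * k) δ)
    (x : Fin n → ℝ) (L : Finset (Fin n)) (hsupp : ∀ i, x i ≠ 0 ↔ i ∈ L)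
    (hL : L.card = k)
    (y0 : Fin m → ℝ) (hy0 : y0 = M *ᵥ x) (hy0ne : y0 ≠ 0)
    (w : Fin m → ℝ) (y : Fin m → ℝ) (hy : y = y0 + w)
    (T : Finset (Fin n)) (hT : T.card = k) (hdisj : Disjoint T L)
    (cδ : ℝ) (hcδ : cδ = (1 - δ ^ 2) * (1 - δ)) :
    ∃ i ∈ L,
      |(residT M T *ᵥ fun r => M r i) ⬝ᵥ y| /
          nrm (residT M T *ᵥ fun r => M r i) ≥
        Real.sqrt (cδ * (1 - δ ^ 2) / (k : ℝ)) * nrm y0 -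
          |(residT M T *ᵥ fun r => M r i) ⬝ᵥ w| /
            nrm (residT M T *ᵥ fun r => M r i) := by
  subst hcδ hy hy0
  have hx : ∀ i ∉ L, x i = 0 := fun i hi => not_not.mp fun h => hi ((hsupp i).mp h)
  have hdet := hRIP.isUnit_det_gram (T := T) hδ1 (by omega)
  obtain ⟨i, hiL, hi⟩ := hRIP.exists_mem_le_abs_residT_col_dotProduct hδ0.le hδ1 hx
    (by rintro rfl; simp at hy0ne) hL.le hT.le hdisj
  refine ⟨i, hiL, sub_div_nrm_le_abs_dotProduct_add_div_nrm ?_ hi⟩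
  exact (nrm_residT_mulVec_le hdet _).trans (by rw [nrm, hunit i, Real.sqrt_one])

end
end

section
/- Let M ∈ ℝ^{m×n}, Ω_Λ ∈ ℝ^{l×n}, y ∈ ℝᵐ, and B_Λ = MᵀM + Ω_ΛᵀΩ_Λ. Suppose x̂ ∈ ℝⁿ and z ∈ ℝᵐ satisfy B_Λ x̂ + Mᵀz = Mᵀy and M x̂ = y. Then for every x₂ ∈ ℝⁿ with M x₂ = y one has ‖Ω_Λ x₂‖² = ‖Ω_Λ (x₂ − x̂)‖² + ‖Ω_Λ x̂‖²; in particular ‖Ω_Λ x̂‖ ≤ ‖Ω_Λ x₂‖, so x̂ minimizes ‖Ω_Λ x‖ subject to Mx = y. -/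
open Matrix

noncomputable section

/-- A solution `x̂` of the optimality system `B_Λ x̂ + Mᵀz = Mᵀy`, `Mx̂ = y`
minimizes `‖Ω_Λ x‖` subject to `Mx = y`. -/
theorem stmt15 {m n l : ℕ} (M : Matrix (Fin m) (Fin n) ℝ)
    (Ω : Matrix (Fin l) (Fin n) ℝ) (y : Fin m → ℝ)
    (B : Matrix (Fin n) (Fin n) ℝ) (hB : B = Mᵀ * M + Ωᵀ * Ω)
    (xhat : Fin n → ℝ) (z : Fin m → ℝ)
    (hopt : B *ᵥ xhat + Mᵀ *ᵥ z = Mᵀ *ᵥ y)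
    (hfeas : M *ᵥ xhat = y) :
    ∀ x2 : Fin n → ℝ, M *ᵥ x2 = y →
      (Ω *ᵥ x2) ⬝ᵥ (Ω *ᵥ x2) =
          (Ω *ᵥ (x2 - xhat)) ⬝ᵥ (Ω *ᵥ (x2 - xhat)) + (Ω *ᵥ xhat) ⬝ᵥ (Ω *ᵥ xhat) ∧
        nrm (Ω *ᵥ xhat) ≤ nrm (Ω *ᵥ x2) := by
  intro x2 hx2
  set d : Fin n → ℝ := x2 - xhat with hd
  have hMd : M *ᵥ d = 0 := by
    rw [hd, mulVec_sub, hx2, hfeas, sub_self]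
  -- d ⬝ (Aᵀ v) = (A d) ⬝ v
  have htrans : ∀ {k : ℕ} (A : Matrix (Fin k) (Fin n) ℝ) (v : Fin k → ℝ),
      d ⬝ᵥ (Aᵀ *ᵥ v) = (A *ᵥ d) ⬝ᵥ v := by
    intro k A v
    rw [dotProduct_mulVec, vecMul_transpose]
  have key : (Ω *ᵥ d) ⬝ᵥ (Ω *ᵥ xhat) = 0 := by
    have h0 : d ⬝ᵥ (B *ᵥ xhat + Mᵀ *ᵥ z) = d ⬝ᵥ (Mᵀ *ᵥ y) := by rw [hopt]
    rw [hB] at h0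
    rw [dotProduct_add, add_mulVec, dotProduct_add, ← mulVec_mulVec,
      ← mulVec_mulVec, htrans, htrans, htrans, htrans, hMd,
      zero_dotProduct, zero_dotProduct, zero_dotProduct, zero_add] at h0
    simpa using h0
  have key' : (Ω *ᵥ xhat) ⬝ᵥ (Ω *ᵥ d) = 0 := by
    rw [dotProduct_comm]; exact key
  have hx2d : Ω *ᵥ x2 = Ω *ᵥ d + Ω *ᵥ xhat := by
    rw [hd, mulVec_sub, sub_add_cancel]
  have heq : (Ω *ᵥ x2) ⬝ᵥ (Ω *ᵥ x2) =
      (Ω *ᵥ d) ⬝ᵥ (Ω *ᵥ d) + (Ω *ᵥ xhat) ⬝ᵥ (Ω *ᵥ xhat) := by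
    rw [hx2d, dotProduct_add, add_dotProduct, add_dotProduct, key, key']
    ring
  refine ⟨heq, ?_⟩
  have hnn : ∀ (v : Fin l → ℝ), 0 ≤ v ⬝ᵥ v := fun v =>
    Finset.sum_nonneg fun i _ => mul_self_nonneg _
  unfold nrm
  apply Real.sqrt_le_sqrt
  rw [heq]
  linarith [hnn (Ω *ᵥ d)]

end
end

section
/- Let M ∈ ℝ^{m×n}, Ω_Λ ∈ ℝ^{l×n}, B_Λ = MᵀM + Ω_ΛᵀΩ_Λ, and suppose both B_Λ and C_Λ⁻¹ := M B_Λ⁻¹ Mᵀ are invertible. Then for every y ∈ ℝᵐ, the vector x̂ = B_Λ⁻¹ Mᵀ (M B_Λ⁻¹ Mᵀ)⁻¹ y satisfies M x̂ = y and ‖Ω_Λ x̂‖ ≤ ‖Ω_Λ x‖ for every x ∈ ℝⁿ with Mx = y; i.e., x̂ is a minimizer of ‖Ω_Λ x‖ subject to Mx = y. -/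
open Matrix

noncomputable section

/-- `x̂ = B_Λ⁻¹ Mᵀ (M B_Λ⁻¹ Mᵀ)⁻¹ y` is a minimizer of `‖Ω_Λ x‖` subject to `Mx = y`. -/
theorem stmt16 {m n l : ℕ} (M : Matrix (Fin m) (Fin n) ℝ)
    (Ω : Matrix (Fin l) (Fin n) ℝ)
    (B : Matrix (Fin n) (Fin n) ℝ) (hB : B = Mᵀ * M + Ωᵀ * Ω)
    (hBinv : IsUnit B) (hCinv : IsUnit (M * B⁻¹ * Mᵀ))
    (y : Fin m → ℝ) (xhat : Fin n → ℝ)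
    (hxhat : xhat = B⁻¹ *ᵥ (Mᵀ *ᵥ ((M * B⁻¹ * Mᵀ)⁻¹ *ᵥ y))) :
    M *ᵥ xhat = y ∧
      ∀ x : Fin n → ℝ, M *ᵥ x = y → nrm (Ω *ᵥ xhat) ≤ nrm (Ω *ᵥ x) := by
  have hBdet : IsUnit B.det := (Matrix.isUnit_iff_isUnit_det B).mp hBinv
  have hCdet : IsUnit (M * B⁻¹ * Mᵀ).det :=
    (Matrix.isUnit_iff_isUnit_det _).mp hCinv
  set c : Fin m → ℝ := (M * B⁻¹ * Mᵀ)⁻¹ *ᵥ y with hc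
  have hMx : M *ᵥ xhat = y := by
    rw [hxhat, hc, Matrix.mulVec_mulVec, Matrix.mulVec_mulVec,
      Matrix.mulVec_mulVec, Matrix.mul_nonsing_inv _ hCdet,
      Matrix.one_mulVec]
  refine ⟨hMx, fun x hx => ?_⟩
  have hBsymm : Bᵀ = B := by
    rw [hB, Matrix.transpose_add, Matrix.transpose_mul, Matrix.transpose_mul,
      Matrix.transpose_transpose, Matrix.transpose_transpose]
  -- B *ᵥ xhat = Mᵀ *ᵥ c
  have hBx : B *ᵥ xhat = Mᵀ *ᵥ c := by
    rw [hxhat, Matrix.mulVec_mulVec, Matrix.mul_nonsing_inv _ hBdet,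
      Matrix.one_mulVec]
  have hMd : M *ᵥ (x - xhat) = 0 := by
    rw [Matrix.mulVec_sub, hx, hMx, sub_self]
  -- cross term vanishes
  have hcross : (Ω *ᵥ xhat) ⬝ᵥ (Ω *ᵥ (x - xhat)) = 0 := by
    have h1 : (Ω *ᵥ xhat) ⬝ᵥ (Ω *ᵥ (x - xhat))
        = xhat ⬝ᵥ ((Ωᵀ * Ω) *ᵥ (x - xhat)) := by
      rw [← Matrix.mulVec_mulVec, Matrix.dotProduct_mulVec xhat,
        Matrix.vecMul_transpose]
    have h2 : (Ωᵀ * Ω) *ᵥ (x - xhat) = B *ᵥ (x - xhat) := by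
      have hz : (Mᵀ * M) *ᵥ (x - xhat) = 0 := by
        rw [← Matrix.mulVec_mulVec, hMd, Matrix.mulVec_zero]
      rw [hB, Matrix.add_mulVec, hz, zero_add]
    have h3 : xhat ⬝ᵥ (B *ᵥ (x - xhat)) = (B *ᵥ xhat) ⬝ᵥ (x - xhat) := by
      rw [Matrix.dotProduct_mulVec, ← hBsymm, Matrix.vecMul_transpose, hBsymm]
    have h4 : (Mᵀ *ᵥ c) ⬝ᵥ (x - xhat) = 0 := by
      rw [dotProduct_comm, Matrix.dotProduct_mulVec,
        Matrix.vecMul_transpose, dotProduct_comm, hMd,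
        dotProduct_zero]
    rw [h1, h2, h3, hBx, h4]
  have hdec : (Ω *ᵥ xhat) ⬝ᵥ (Ω *ᵥ xhat) ≤ (Ω *ᵥ x) ⬝ᵥ (Ω *ᵥ x) := by
    have hexp : Ω *ᵥ x = Ω *ᵥ xhat + Ω *ᵥ (x - xhat) := by
      rw [← Matrix.mulVec_add]; ring_nf
    rw [hexp, add_dotProduct, dotProduct_add,
      dotProduct_add, hcross, dotProduct_comm (Ω *ᵥ (x - xhat)),
      hcross]
    have : 0 ≤ (Ω *ᵥ (x - xhat)) ⬝ᵥ (Ω *ᵥ (x - xhat)) :=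
      Finset.sum_nonneg fun i _ => mul_self_nonneg _
    linarith
  exact Real.sqrt_le_sqrt hdec

end
end

section
/- Let M ∈ ℝ^{m×n}, Ω_Λ ∈ ℝ^{l×n}, B_Λ = MᵀM + Ω_ΛᵀΩ_Λ, and suppose both B_Λ and M B_Λ⁻¹ Mᵀ are invertible; set C_Λ = (M B_Λ⁻¹ Mᵀ)⁻¹. Then for every y ∈ ℝᵐ, the vector x̂ = B_Λ⁻¹ Mᵀ C_Λ y satisfies ‖Ω_Λ x̂‖² = yᵀ C_Λ y − ‖y‖², i.e., ‖Ω_Λ x̂‖² = yᵀ(C_Λ − I)y. -/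
open Matrix

noncomputable section

/-- For `x̂ = B_Λ⁻¹ Mᵀ C_Λ y` with `C_Λ = (M B_Λ⁻¹ Mᵀ)⁻¹`, one has
`‖Ω_Λ x̂‖² = yᵀ C_Λ y − ‖y‖² = yᵀ(C_Λ − I)y`. -/
theorem stmt17 {m n l : ℕ} (M : Matrix (Fin m) (Fin n) ℝ)
    (Ω : Matrix (Fin l) (Fin n) ℝ)
    (B : Matrix (Fin n) (Fin n) ℝ) (hB : B = Mᵀ * M + Ωᵀ * Ω)
    (hBinv : IsUnit B) (hCinv : IsUnit (M * B⁻¹ * Mᵀ))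
    (C : Matrix (Fin m) (Fin m) ℝ) (hC : C = (M * B⁻¹ * Mᵀ)⁻¹)
    (y : Fin m → ℝ) (xhat : Fin n → ℝ)
    (hxhat : xhat = B⁻¹ *ᵥ (Mᵀ *ᵥ (C *ᵥ y))) :
    (Ω *ᵥ xhat) ⬝ᵥ (Ω *ᵥ xhat) = y ⬝ᵥ (C *ᵥ y) - y ⬝ᵥ y ∧
      (Ω *ᵥ xhat) ⬝ᵥ (Ω *ᵥ xhat) = y ⬝ᵥ ((C - 1) *ᵥ y) := by
  have hBd : IsUnit B.det := (Matrix.isUnit_iff_isUnit_det B).mp hBinv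
  have hCd : IsUnit (M * B⁻¹ * Mᵀ).det :=
    (Matrix.isUnit_iff_isUnit_det _).mp hCinv
  have h1 : M * B⁻¹ * Mᵀ * C = 1 := by
    rw [hC]; exact Matrix.mul_nonsing_inv _ hCd
  have hMx : M *ᵥ xhat = y := by
    rw [hxhat, Matrix.mulVec_mulVec, Matrix.mulVec_mulVec,
      Matrix.mulVec_mulVec, h1, Matrix.one_mulVec]
  have hBx : B *ᵥ xhat = Mᵀ *ᵥ (C *ᵥ y) := by
    rw [hxhat, Matrix.mulVec_mulVec, Matrix.mul_nonsing_inv _ hBd,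
      Matrix.one_mulVec]
  have key : (Ω *ᵥ xhat) ⬝ᵥ (Ω *ᵥ xhat) = y ⬝ᵥ (C *ᵥ y) - y ⬝ᵥ y := by
    have h2 : (Ω *ᵥ xhat) ⬝ᵥ (Ω *ᵥ xhat)
        = xhat ⬝ᵥ ((Ωᵀ * Ω) *ᵥ xhat) := by
      rw [← Matrix.mulVec_mulVec, Matrix.dotProduct_mulVec xhat Ωᵀ,
        Matrix.vecMul_transpose]
    have h3 : (Ωᵀ * Ω) *ᵥ xhat = Mᵀ *ᵥ (C *ᵥ y) - Mᵀ *ᵥ y := by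
      have : Ωᵀ * Ω = B - Mᵀ * M := by rw [hB]; abel
      rw [this, Matrix.sub_mulVec, hBx, ← Matrix.mulVec_mulVec, hMx]
    rw [h2, h3, dotProduct_sub, Matrix.dotProduct_mulVec xhat Mᵀ,
      Matrix.vecMul_transpose, hMx, Matrix.dotProduct_mulVec xhat Mᵀ,
      Matrix.vecMul_transpose, hMx]
  refine ⟨key, ?_⟩
  rw [key, Matrix.sub_mulVec, dotProduct_sub, Matrix.one_mulVec]

end
end
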